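/- Let A ∈ ℝ^{n×n} be a symmetric matrix, g ∈ ℝ^n, and N a positive integer. Let ξ_1, …, ξ_N ∈ ℝ^n be arbitrary vectors, and define ṽ_0 = g, ṽ_1 = A g − ξ_1, ṽ_k = 2(A ṽ_{k−1} − ξ_k) − ṽ_{k−2} for 2 ≤ k ≤ N, and δ_k = T_k(A)g − ṽ_k. Then for every k with 1 ≤ k ≤ N, δ_k = U_{k−1}(A) ξ_1 + 2·Σ_{i=2}^{k} U_{k−i}(A) ξ_i, where U_j denotes the j-th Chebyshev polynomial of the second kind. -/

import Mathlib

open Matrix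

/-- `T_k(A)`: the `k`-th Chebyshev polynomial of the first kind applied to a matrix `A`. -/
noncomputable def chebTMat {n : ℕ} (A : Matrix (Fin n) (Fin n) ℝ) (k : ℕ) :
    Matrix (Fin n) (Fin n) ℝ :=
  Polynomial.aeval A (Polynomial.Chebyshev.T ℝ (k : ℤ))

/-- `U_k(A)`: the `k`-th Chebyshev polynomial of the second kind applied to a matrix `A`. -/
noncomputable def chebUMat {n : ℕ} (A : Matrix (Fin n) (Fin n) ℝ) (k : ℤ) :
    Matrix (Fin n) (Fin n) ℝ :=
  Polynomial.aeval A (Polynomial.Chebyshev.U ℝ k)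

/-!
The error `δ_k = T_k(A) g - ṽ_k` obeys the Chebyshev three-term recurrence
`δ_{k+2} = 2 A δ_{k+1} - δ_k + 2 ξ_{k+2}` with `δ_0 = 0`, `δ_1 = ξ_1`, because the exact iterates
`T_k(A) g` obey it without forcing term. `U_{k-1}(A)` is the solution of the unforced recurrence
with `δ_0 = 0`, `δ_1 = 1`, so by superposition (a discrete Duhamel principle) each forcing term
`e_i` contributes `U_{k-i}(A) e_i`.
-/

section

open Polynomial Polynomial.Chebyshev Finset

variable {R M : Type*} [CommRing R] [AddCommGroup M] [Module R M] (f : Module.End R M)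

lemma aeval_T_add_two_apply (m : ℤ) (v : M) :
    aeval f (T R (m + 2)) v = (2 : R) • f (aeval f (T R (m + 1)) v) - aeval f (T R m) v := by
  simp [T_add_two, mul_assoc, two_smul, Module.End.mul_apply, map_ofNat]

lemma aeval_U_add_two_apply (m : ℤ) (v : M) :
    aeval f (U R (m + 2)) v = (2 : R) • f (aeval f (U R (m + 1)) v) - aeval f (U R m) v := by
  simp [U_add_two, mul_assoc, two_smul, Module.End.mul_apply, map_ofNat]

lemma sum_Icc_aeval_U_add_two (e : ℕ → M) (k : ℕ) :
    ∑ i ∈ Icc 2 (k + 2), aeval f (U R ((k + 2 : ℕ) - i : ℤ)) (e i) =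
      (2 : R) • f (∑ i ∈ Icc 2 (k + 1), aeval f (U R ((k + 1 : ℕ) - i : ℤ)) (e i))
        - ∑ i ∈ Icc 2 k, aeval f (U R (k - i : ℤ)) (e i) + e (k + 2) := by
  have hlow : ∑ i ∈ Icc 2 (k + 1), aeval f (U R (k - i : ℤ)) (e i) =
      ∑ i ∈ Icc 2 k, aeval f (U R (k - i : ℤ)) (e i) := by
    refine (sum_subset (Icc_subset_Icc_right k.le_succ) fun i hi hik => ?_).symm
    obtain rfl : i = k + 1 := by simp only [mem_Icc] at hi hik; omega
    simp
  have hstep : ∀ i ∈ Icc 2 (k + 1), aeval f (U R ((k + 2 : ℕ) - i : ℤ)) (e i) =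
      (2 : R) • f (aeval f (U R ((k + 1 : ℕ) - i : ℤ)) (e i)) - aeval f (U R (k - i : ℤ)) (e i) := by
    intro i _
    push_cast
    rw [show (k : ℤ) + 2 - i = k - i + 2 by ring, show (k : ℤ) + 1 - i = k - i + 1 by ring]
    exact aeval_U_add_two_apply f _ _
  rw [sum_Icc_succ_top (by omega), sum_congr rfl hstep, sum_sub_distrib, ← smul_sum, ← map_sum,
    hlow]
  simp [show (k : ℤ) + 2 - (k + 1 + 1) = 0 by ring]

theorem eq_aeval_U_of_chebyshev_recurrence (N : ℕ) (c : M) (d e : ℕ → M)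
    (h0 : d 0 = 0) (h1 : d 1 = c)
    (hrec : ∀ k, k + 2 ≤ N → d (k + 2) = (2 : R) • f (d (k + 1)) - d k + e (k + 2)) :
    ∀ k ≤ N, d k = aeval f (U R ((k : ℤ) - 1)) c
      + ∑ i ∈ Icc 2 k, aeval f (U R ((k : ℤ) - i)) (e i) := by
  intro k
  induction k using Nat.strong_induction_on with
  | _ k ih =>
    match k with
    | 0 => simp [h0]
    | 1 => simp [h1]
    | k + 2 =>
      intro hk
      have hU := aeval_U_add_two_apply f ((k : ℤ) - 1) c
      rw [hrec k hk, ih (k + 1) (by omega) (by omega), ih k (by omega) (by omega),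
        sum_Icc_aeval_U_add_two]
      push_cast at hU ⊢
      rw [show (k : ℤ) + 2 - 1 = (k - 1) + 2 by ring, hU, show (k : ℤ) + 1 - 1 = k - 1 + 1 by ring]
      simp only [map_add, smul_add]
      abel

end

lemma Matrix.aeval_mulVec {n R : Type*} [Fintype n] [DecidableEq n] [CommRing R]
    (A : Matrix n n R) (p : Polynomial R) (v : n → R) :
    Polynomial.aeval A p *ᵥ v = Polynomial.aeval (toLinAlgEquiv' A) p v := by
  rw [Polynomial.aeval_algEquiv, AlgHom.comp_apply, AlgEquiv.coe_toAlgHom, toLinAlgEquiv'_apply]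

theorem cheb_recurrence_accumulated_error (n N : ℕ)
    (A : Matrix (Fin n) (Fin n) ℝ)
    (g : Fin n → ℝ) (ξ : ℕ → Fin n → ℝ) (vt : ℕ → Fin n → ℝ)
    (h0 : vt 0 = g)
    (h1 : vt 1 = A.mulVec g - ξ 1)
    (hrec : ∀ k, 2 ≤ k → k ≤ N →
      vt k = (2 : ℝ) • (A.mulVec (vt (k - 1)) - ξ k) - vt (k - 2)) :
    ∀ k, 1 ≤ k → k ≤ N →
      (chebTMat A k).mulVec g - vt k =
        (chebUMat A ((k : ℤ) - 1)).mulVec (ξ 1)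
          + (2 : ℝ) • ∑ i ∈ Finset.Icc 2 k, (chebUMat A ((k : ℤ) - (i : ℤ))).mulVec (ξ i) := by
  open Polynomial Polynomial.Chebyshev in
  intro k _ hk
  simp only [chebTMat, chebUMat, aeval_mulVec]
  set f := toLinAlgEquiv' A
  have hδ_rec : ∀ k, k + 2 ≤ N → aeval f (T ℝ (k + 2 : ℕ)) g - vt (k + 2) =
      (2 : ℝ) • f (aeval f (T ℝ (k + 1 : ℕ)) g - vt (k + 1)) - (aeval f (T ℝ k) g - vt k)
        + ((2 : ℝ) • ξ) (k + 2) := by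
    intro k hk
    rw [hrec (k + 2) (by omega) hk]
    push_cast
    rw [aeval_T_add_two_apply]
    simp only [map_sub, toLinAlgEquiv'_apply, f, Pi.smul_apply]
    module
  rw [eq_aeval_U_of_chebyshev_recurrence f N (ξ 1) (fun k ↦ aeval f (T ℝ k) g - vt k)
    ((2 : ℝ) • ξ) (by simp [h0]) (by simp [h1, f, toLinAlgEquiv'_apply]) hδ_rec k hk]
  simp only [Pi.smul_apply, map_smul, Finset.smul_sum]
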